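/- arXiv:1712.02045 — 4 statements merged into one kernel-verified Lean document; each statement's English description precedes it below -/
import Mathlib

section
/- For every sub-hypergraph H of L, ΔγΔγ(H) = Δ(max(L) ∩ H), where max(L) denotes the set of maximal faces of L. Consequently, the operator ΔγΔγ is idempotent: (ΔγΔγ)²(H) = ΔγΔγ(H). -/
open Set

variable {V : Type*} [DecidableEq V]

/-- An abstract simplicial complex: simplices are nonempty finite sets,
closed under nonempty subsets. -/
def IsComplex (L : Set (Finset V)) : Prop :=
  (∀ σ ∈ L, σ.Nonempty) ∧ ∀ σ ∈ L, ∀ τ : Finset V, τ ⊆ σ → τ.Nonempty → τ ∈ L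

/-- ΔH : the minimal complex containing H (downward closure inside L). -/
def dUp (L H : Set (Finset V)) : Set (Finset V) :=
  {σ | σ ∈ L ∧ ∃ τ ∈ H, σ ⊆ τ}

/-- δH : the maximal complex contained in H. -/
def dDown (L H : Set (Finset V)) : Set (Finset V) :=
  {σ | σ ∈ L ∧ ∀ τ : Finset V, τ ⊆ σ → τ.Nonempty → τ ∈ H}

/-- γH : the complement hypergraph in L. -/
def gam (L H : Set (Finset V)) : Set (Finset V) := L \ H

/-- Ext = Δγδγ. -/
def ExtOp (L : Set (Finset V)) (H : Set (Finset V)) : Set (Finset V) :=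
  dUp L (gam L (dDown L (gam L H)))

/-- Int = δγΔγ. -/
def IntOp (L : Set (Finset V)) (H : Set (Finset V)) : Set (Finset V) :=
  dDown L (gam L (dUp L (gam L H)))

/-- The set of maximal faces of L. -/
def maxFaces (L : Set (Finset V)) : Set (Finset V) :=
  {σ | σ ∈ L ∧ ∀ τ ∈ L, σ ⊆ τ → σ = τ}

/-
Taking complements, `γΔγ H` consists of the faces of `L` all of whose cofaces lie in `H`.
It is closed upwards in `L`, and a maximal face lies in it exactly when it lies in `H`.
Since `L` is finite, every face lies below a maximal face, so the downward closure of an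
upward-closed family only depends on its maximal faces; hence `ΔγΔγ H = Δ(max L ∩ H)`.
Applying this twice, idempotence reduces to `max L ∩ Δ(max L ∩ H) = max L ∩ H`, which holds
because a face below a maximal face `m` that is itself maximal equals `m`.
-/

section

variable {L H K : Set (Finset V)}

omit [DecidableEq V] in
theorem mem_maxFaces_iff_maximal {σ : Finset V} : σ ∈ maxFaces L ↔ Maximal (· ∈ L) σ :=
  maximal_iff.symm

omit [DecidableEq V] in
theorem exists_mem_maxFaces_superset (hfin : L.Finite) {τ : Finset V} (hτ : τ ∈ L) :
    ∃ m ∈ maxFaces L, τ ⊆ m := by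
  obtain ⟨m, hτm, hm⟩ := hfin.exists_le_maximal hτ
  exact ⟨m, mem_maxFaces_iff_maximal.2 hm, hτm⟩

omit [DecidableEq V] in
theorem dUp_mono (hHK : H ⊆ K) : dUp L H ⊆ dUp L K :=
  fun _ ⟨hσ, τ, hτ, hστ⟩ => ⟨hσ, τ, hHK hτ, hστ⟩

omit [DecidableEq V] in
theorem dUp_maxFaces_inter_of_upwardClosed (hfin : L.Finite) (hKL : K ⊆ L)
    (hK : ∀ σ ∈ K, ∀ τ ∈ L, σ ⊆ τ → τ ∈ K) :
    dUp L (maxFaces L ∩ K) = dUp L K := by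
  refine (dUp_mono inter_subset_right).antisymm ?_
  rintro σ ⟨hσ, τ, hτK, hστ⟩
  obtain ⟨m, hm, hτm⟩ := exists_mem_maxFaces_superset hfin (hKL hτK)
  exact ⟨hσ, m, ⟨hm, hK τ hτK m hm.1 hτm⟩, hστ.trans hτm⟩

omit [DecidableEq V] in
theorem mem_gam_dUp_gam_iff {σ : Finset V} :
    σ ∈ gam L (dUp L (gam L H)) ↔ σ ∈ L ∧ ∀ τ ∈ L, σ ⊆ τ → τ ∈ H := by
  simp only [gam, dUp, mem_sdiff, mem_ofPred_eq]
  grind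

omit [DecidableEq V] in
theorem gam_dUp_gam_upwardClosed :
    ∀ σ ∈ gam L (dUp L (gam L H)), ∀ τ ∈ L, σ ⊆ τ → τ ∈ gam L (dUp L (gam L H)) := by
  intro σ hσ τ hτ hστ
  rw [mem_gam_dUp_gam_iff] at hσ ⊢
  exact ⟨hτ, fun ρ hρ hτρ => hσ.2 ρ hρ (hστ.trans hτρ)⟩

omit [DecidableEq V] in
theorem maxFaces_inter_gam_dUp_gam : maxFaces L ∩ gam L (dUp L (gam L H)) = maxFaces L ∩ H := by
  ext σ
  simp only [mem_inter_iff, mem_gam_dUp_gam_iff, and_congr_right_iff]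
  intro hσ
  exact ⟨fun h => h.2 σ hσ.1 subset_rfl, fun h => ⟨hσ.1, fun τ hτ hστ => hσ.2 τ hτ hστ ▸ h⟩⟩

omit [DecidableEq V] in
theorem maxFaces_inter_dUp_maxFaces_inter :
    maxFaces L ∩ dUp L (maxFaces L ∩ H) = maxFaces L ∩ H := by
  refine subset_antisymm ?_ fun σ hσ => ⟨hσ.1, hσ.1.1, σ, hσ, subset_rfl⟩
  rintro σ ⟨hσ, -, τ, ⟨hτ, hτH⟩, hστ⟩
  exact ⟨hσ, hσ.2 τ hτ.1 hστ ▸ hτH⟩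

omit [DecidableEq V] in
theorem dUp_gam_dUp_gam_eq_dUp_maxFaces_inter (hfin : L.Finite) :
    dUp L (gam L (dUp L (gam L H))) = dUp L (maxFaces L ∩ H) := by
  rw [← maxFaces_inter_gam_dUp_gam]
  exact (dUp_maxFaces_inter_of_upwardClosed hfin sdiff_subset gam_dUp_gam_upwardClosed).symm

end

theorem dUp_gam_dUp_gam_general (L : Set (Finset V)) (hfin : L.Finite)
    (H : Set (Finset V)) :
    dUp L (gam L (dUp L (gam L H))) = dUp L (maxFaces L ∩ H) ∧
      dUp L (gam L (dUp L (gam L (dUp L (gam L (dUp L (gam L H))))))) =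
        dUp L (gam L (dUp L (gam L H))) := by
  have hclosure (K : Set (Finset V)) := dUp_gam_dUp_gam_eq_dUp_maxFaces_inter (H := K) hfin
  refine ⟨hclosure H, ?_⟩
  rw [hclosure, hclosure H, maxFaces_inter_dUp_maxFaces_inter]

theorem dUp_gam_dUp_gam (L : Set (Finset V)) (hfin : L.Finite) (hL : IsComplex L)
    (H : Set (Finset V)) (hH : H ⊆ L) :
    dUp L (gam L (dUp L (gam L H))) = dUp L (maxFaces L ∩ H) ∧
      dUp L (gam L (dUp L (gam L (dUp L (gam L (dUp L (gam L H))))))) =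
        dUp L (gam L (dUp L (gam L H))) :=
  dUp_gam_dUp_gam_general L hfin H
end

section
/- Suppose the diameter of L is n. If H is a nonempty sub-hypergraph of L and k ≥ n, then Ext^k(H) = L. -/
open Set

variable {V : Type*} [DecidableEq V]

/-- A path in L: a nonempty sequence of simplices of L in which
consecutive simplices intersect. -/
def IsPath (L : Set (Finset V)) (s : List (Finset V)) : Prop :=
  s ≠ [] ∧ (∀ σ ∈ s, σ ∈ L) ∧ s.Chain' (fun a b => (a ∩ b).Nonempty)

/-- The distance between two simplices: the minimal length of a path
from σ to σ'. -/
noncomputable def pathDist (L : Set (Finset V)) (σ σ' : Finset V) : ℕ :=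
  sInf {m | ∃ s : List (Finset V),
    IsPath L s ∧ s.head? = some σ ∧ s.getLast? = some σ' ∧ s.length = m}

/-- The diameter of L. -/
noncomputable def diam (L : Set (Finset V)) : ℕ :=
  sSup {m | ∃ σ ∈ L, ∃ σ' ∈ L, pathDist L σ σ' = m}

/-- L is connected: any two simplices are joined by a path. -/
def IsConn (L : Set (Finset V)) : Prop :=
  ∀ σ ∈ L, ∀ σ' ∈ L, ∃ s : List (Finset V),
    IsPath L s ∧ s.head? = some σ ∧ s.getLast? = some σ'

/-! A simplex of `L` with a nonempty face in `K` lies in `Ext K`, and `Ext K` is closed under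
faces. Hence if `τ ∈ Ext K` meets `σ ∈ L`, the face `σ ∩ τ` puts `σ` into `Ext (Ext K)`: each
iteration of `Ext` advances one step along paths. Since `K ⊆ Ext K`, the iterates increase, and
a shortest path from any simplex to `H` has at most `diam L` simplices. -/

section ExtOp

omit [DecidableEq V]

variable {L K : Set (Finset V)}

lemma extOp_subset : ExtOp L K ⊆ L := fun _ h => h.1

lemma mem_extOp_of_face_mem {σ τ : Finset V} (hσ : σ ∈ L) (hτσ : τ ⊆ σ) (hτ : τ.Nonempty)
    (hτK : τ ∈ K) : σ ∈ ExtOp L K :=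
  ⟨hσ, σ, ⟨hσ, fun hδ => (hδ.2 τ hτσ hτ).2 hτK⟩, subset_rfl⟩

lemma subset_extOp (hL : IsComplex L) (hK : K ⊆ L) : K ⊆ ExtOp L K :=
  fun σ hσ => mem_extOp_of_face_mem (hK hσ) subset_rfl (hL.1 σ (hK hσ)) hσ

lemma mem_extOp_of_subset (hL : IsComplex L) {σ τ : Finset V} (hσ : σ ∈ ExtOp L K)
    (hτσ : τ ⊆ σ) (hτ : τ.Nonempty) : τ ∈ ExtOp L K := by
  obtain ⟨hσL, ρ, hρ, hσρ⟩ := hσ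
  exact ⟨hL.2 σ hσL τ hτσ hτ, ρ, hρ, hτσ.trans hσρ⟩

lemma mem_extOp_extOp_of_inter_nonempty [DecidableEq V] (hL : IsComplex L) {σ τ : Finset V}
    (hσ : σ ∈ L) (hτ : τ ∈ ExtOp L K) (hστ : (σ ∩ τ).Nonempty) : σ ∈ ExtOp L (ExtOp L K) :=
  mem_extOp_of_face_mem hσ Finset.inter_subset_left hστ
    (mem_extOp_of_subset hL hτ Finset.inter_subset_right hστ)

lemma iterate_extOp_subset (hK : K ⊆ L) : ∀ j, (ExtOp L)^[j] K ⊆ L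
  | 0 => hK
  | j + 1 => by rw [Function.iterate_succ_apply']; exact extOp_subset

lemma monotone_iterate_extOp (hL : IsComplex L) (hK : K ⊆ L) :
    Monotone fun j => (ExtOp L)^[j] K :=
  monotone_nat_of_le_succ fun j => by
    rw [Function.iterate_succ_apply']
    exact subset_extOp hL (iterate_extOp_subset hK j)

lemma mem_iterate_extOp_of_isPath [DecidableEq V] (hL : IsComplex L) {τ : Finset V}
    (hτ : τ ∈ K) :
    ∀ {s : List (Finset V)} {σ : Finset V}, IsPath L s → s.head? = some σ →
      s.getLast? = some τ → σ ∈ (ExtOp L)^[s.length] K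
  | [], _, hs, _, _ => absurd rfl hs.1
  | [a], σ, hs, hhead, hlast => by
    obtain rfl : a = σ := Option.some.inj hhead
    obtain rfl : a = τ := Option.some.inj hlast
    have haL : a ∈ L := hs.2.1 a (by simp)
    exact mem_extOp_of_face_mem haL subset_rfl (hL.1 a haL) hτ
  | a :: b :: t, σ, hs, hhead, hlast => by
    obtain rfl : a = σ := Option.some.inj hhead
    have hchain : (a ∩ b).Nonempty ∧ (b :: t).IsChain (fun a b => (a ∩ b).Nonempty) :=
      List.isChain_cons_cons.mp hs.2.2
    have htail : IsPath L (b :: t) :=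
      ⟨List.cons_ne_nil _ _, fun x hx => hs.2.1 x (List.mem_cons_of_mem _ hx), hchain.2⟩
    have hb : b ∈ ExtOp L ((ExtOp L)^[t.length] K) := by
      rw [← Function.iterate_succ_apply' (ExtOp L)]
      exact mem_iterate_extOp_of_isPath hL hτ htail rfl
        (by simpa [List.getLast?_cons_cons] using hlast)
    show a ∈ (ExtOp L)^[t.length + 2] K
    rw [Function.iterate_succ_apply', Function.iterate_succ_apply']
    exact mem_extOp_extOp_of_inter_nonempty hL (hs.2.1 a (by simp)) hb hchain.1

end ExtOp

lemma exists_isPath_length_eq_pathDist {L : Set (Finset V)} (hconn : IsConn L)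
    {σ τ : Finset V} (hσ : σ ∈ L) (hτ : τ ∈ L) :
    ∃ s, IsPath L s ∧ s.head? = some σ ∧ s.getLast? = some τ ∧ s.length = pathDist L σ τ := by
  obtain ⟨s, hs, hhead, hlast⟩ := hconn σ hσ τ hτ
  exact Nat.sInf_mem (s := {m | ∃ s : List (Finset V), IsPath L s ∧ s.head? = some σ ∧
    s.getLast? = some τ ∧ s.length = m}) ⟨s.length, s, hs, hhead, hlast, rfl⟩

lemma pathDist_le_diam {L : Set (Finset V)} (hfin : L.Finite) {σ τ : Finset V}
    (hσ : σ ∈ L) (hτ : τ ∈ L) : pathDist L σ τ ≤ diam L :=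
  le_csSup (hfin.image2 (pathDist L) hfin).bddAbove ⟨σ, hσ, τ, hτ, rfl⟩

theorem ext_iterate_eq_top (L : Set (Finset V)) (hfin : L.Finite) (hL : IsComplex L)
    (hconn : IsConn L) (n : ℕ) (hdiam : diam L = n)
    (H : Set (Finset V)) (hH : H ⊆ L) (hne : H.Nonempty)
    (k : ℕ) (hk : n ≤ k) :
    (ExtOp L)^[k] H = L := by
  refine (iterate_extOp_subset hH k).antisymm fun σ hσ => ?_
  obtain ⟨τ, hτ⟩ := hne
  obtain ⟨s, hs, hhead, hlast, hlen⟩ := exists_isPath_length_eq_pathDist hconn hσ (hH hτ)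
  have hsk : s.length ≤ k :=
    hlen ▸ (pathDist_le_diam hfin hσ (hH hτ)).trans (hdiam.trans_le hk)
  exact monotone_iterate_extOp hL hH hsk (mem_iterate_extOp_of_isPath hL hτ hs hhead hlast)
end

section
/- For every sub-hypergraph H of L and every integer k ≥ 1, Ext^{k-1}(γH) ⊆ γ(Int^k(H)) ⊆ Ext^{k+1}(γH). -/
/-!
Write `A = Δ` and `B = γδγ`, so that `Ext = A ∘ B` and, because `γ` conjugates `Int = δγΔγ`
into `B ∘ A`, `γ ∘ Int^k = (B ∘ A)^k ∘ γ`. On subhypergraphs of `L` both `A` and `B` are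
monotone and inflationary, and for any two such operators `(A ∘ B)^n ≤ (B ∘ A)^(n+1)`:
feed `x ≤ A x` into the monotone map `(A ∘ B)^n` and then apply `B` once more on the outside.
Both inclusions are instances of this, with the roles of `A` and `B` exchanged.
-/

open Set

variable {V : Type*} [DecidableEq V]

theorem iterate_comp_le_iterate_comp_succ {α : Type*} [Preorder α] {f g : α → α} {s : Set α}
    (hf : Monotone f) (hg : Monotone g) (hfs : MapsTo f s s) (hgs : MapsTo g s s)
    (hf_le : ∀ x ∈ s, x ≤ f x) (hg_le : ∀ x ∈ s, x ≤ g x) (n : ℕ) {x : α} (hx : x ∈ s) :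
    (f ∘ g)^[n] x ≤ (g ∘ f)^[n + 1] x := by
  have hfg_iter : MapsTo (f ∘ g)^[n] s s := (hfs.comp hgs).iterate n
  calc (f ∘ g)^[n] x
      ≤ (f ∘ g)^[n] (f x) := (hf.comp hg).iterate n (hf_le x hx)
    _ ≤ g ((f ∘ g)^[n] (f x)) := hg_le _ (hfg_iter (hfs hx))
    _ = (g ∘ f)^[n + 1] x := by
      rw [Function.iterate_succ_apply', Function.comp_apply,
        Function.Semiconj.iterate_right (f := f) (ga := g ∘ f) (gb := f ∘ g) (fun _ => rfl) n x]

section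

variable {α : Type*}

def dualDown (L X : Set (Finset α)) : Set (Finset α) := gam L (dDown L (gam L X))

variable {L : Set (Finset α)}

theorem extOp_eq : ExtOp L = dUp L ∘ dualDown L := rfl

theorem gam_iterate_intOp (H : Set (Finset α)) (k : ℕ) :
    gam L ((IntOp L)^[k] H) = (dualDown L ∘ dUp L)^[k] (gam L H) :=
  Function.Semiconj.iterate_right (f := gam L) (ga := IntOp L) (gb := dualDown L ∘ dUp L)
    (fun _ => rfl) k H

theorem dUp_mono_s14 : Monotone (dUp L) :=
  fun _ _ hXY _ ⟨hσL, τ, hτ, hστ⟩ => ⟨hσL, τ, hXY hτ, hστ⟩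

theorem gam_antitone : Antitone (gam L) :=
  fun _ _ hXY _ ⟨hσL, hσY⟩ => ⟨hσL, fun hσX => hσY (hXY hσX)⟩

theorem dDown_mono : Monotone (dDown L) :=
  fun _ _ hXY _ ⟨hσL, hσ⟩ => ⟨hσL, fun τ hτσ hτ => hXY (hσ τ hτσ hτ)⟩

theorem dualDown_mono : Monotone (dualDown L) :=
  gam_antitone.comp (dDown_mono.comp_antitone gam_antitone)

theorem mapsTo_dUp : MapsTo (dUp L) (Iic L) (Iic L) := fun _ _ _ hσ => hσ.1

theorem mapsTo_dualDown : MapsTo (dualDown L) (Iic L) (Iic L) := fun _ _ _ hσ => hσ.1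

theorem subset_dUp {X : Set (Finset α)} (hX : X ⊆ L) : X ⊆ dUp L X :=
  fun σ hσ => ⟨hX hσ, σ, hσ, subset_rfl⟩

theorem subset_dualDown (hL : ∀ σ ∈ L, σ.Nonempty) {X : Set (Finset α)} (hX : X ⊆ L) :
    X ⊆ dualDown L X :=
  fun σ hσ => ⟨hX hσ, fun hσd => (hσd.2 σ subset_rfl (hL σ (hX hσ))).2 hσ⟩

end

theorem ext_int_sandwich_general (L : Set (Finset V)) (hL : IsComplex L)
    (H : Set (Finset V)) (k : ℕ) :
    (ExtOp L)^[k - 1] (gam L H) ⊆ gam L ((IntOp L)^[k] H) ∧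
      gam L ((IntOp L)^[k] H) ⊆ (ExtOp L)^[k + 1] (gam L H) := by
  have hγH : gam L H ∈ Iic L := sdiff_subset
  have hA : ∀ X ∈ Iic L, X ⊆ dUp L X := fun _ => subset_dUp
  have hB : ∀ X ∈ Iic L, X ⊆ dualDown L X := fun _ => subset_dualDown hL.1
  rw [gam_iterate_intOp, extOp_eq]
  refine ⟨?_, iterate_comp_le_iterate_comp_succ dualDown_mono dUp_mono_s14
    mapsTo_dualDown mapsTo_dUp hB hA k hγH⟩
  cases k with
  | zero => exact subset_rfl
  | succ m =>
    exact iterate_comp_le_iterate_comp_succ dUp_mono_s14 dualDown_mono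
      mapsTo_dUp mapsTo_dualDown hA hB m hγH

theorem ext_int_sandwich (L : Set (Finset V)) (hfin : L.Finite) (hL : IsComplex L)
    (H : Set (Finset V)) (hH : H ⊆ L) (k : ℕ) (hk : 1 ≤ k) :
    (ExtOp L)^[k - 1] (gam L H) ⊆ gam L ((IntOp L)^[k] H) ∧
      gam L ((IntOp L)^[k] H) ⊆ (ExtOp L)^[k + 1] (gam L H) :=
  ext_int_sandwich_general L hL H k
end

section
/- Let r be the smallest integer with Ext^r(γH) = L and t the smallest integer with Int^t(H) = ∅. Then t ∈ {r−1, r, r+1}. -/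
open Set

variable {V : Type*} [DecidableEq V]

/-!
Write `K = γH`. Unfolding the definitions, `Ext K` is the closed star of `K` (the faces of the
simplices having a face in `K`), while `γ (Int H)` is `meeting L K`, the set of simplices sharing
a vertex with some simplex of `K`; so `Int^j H = ∅` exactly when `meeting^[j] K` exhausts `L`.
The two operations interleave: a simplex in the closed star of `A` shares a vertex with a simplex
meeting `A`, and a simplex meeting the closed star of `A` has a vertex lying in it. Hence
`Ext^[j] K ⊆ meeting^[j+1] K` and `meeting^[j] K ⊆ Ext^[j+1] K`, which gives `t ≤ r + 1` and
`r ≤ t + 1`.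
-/

theorem iterate_le_iterate_succ {β : Type*} [Preorder β] {f g : β → β} (hf : Monotone f)
    (hfg : ∀ x, f (g x) ≤ g (g x)) {a : β} (ha : a ≤ g a) (j : ℕ) :
    f^[j] a ≤ g^[j + 1] a := by
  induction j with
  | zero => exact ha
  | succ n ih =>
    calc f^[n + 1] a = f (f^[n] a) := Function.iterate_succ_apply' f n a
      _ ≤ f (g (g^[n] a)) := hf (by rwa [← Function.iterate_succ_apply' g])
      _ ≤ g (g (g^[n] a)) := hfg _
      _ = g^[n + 2] a := by
        rw [Function.iterate_succ_apply' g (n + 1), Function.iterate_succ_apply']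

section Operators

variable {α : Type*} {L : Set (Finset α)}

def closedStar (L K : Set (Finset α)) : Set (Finset α) :=
  {σ | σ ∈ L ∧ ∃ τ ∈ L, σ ⊆ τ ∧ ∃ ρ : Finset α, ρ ⊆ τ ∧ ρ.Nonempty ∧ ρ ∈ K}

def meeting [DecidableEq α] (L A : Set (Finset α)) : Set (Finset α) :=
  {σ | σ ∈ L ∧ ∃ τ ∈ A, (σ ∩ τ).Nonempty}

theorem closedStar_subset (K : Set (Finset α)) : closedStar L K ⊆ L := fun _ h => h.1

theorem closedStar_mono : Monotone (closedStar L) := by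
  rintro A B hAB σ ⟨hσ, τ, hτ, hστ, ρ, hρτ, hρ, hρA⟩
  exact ⟨hσ, τ, hτ, hστ, ρ, hρτ, hρ, hAB hρA⟩

theorem subset_closedStar (hL : IsComplex L) {A : Set (Finset α)} (hA : A ⊆ L) :
    A ⊆ closedStar L A :=
  fun σ hσ => ⟨hA hσ, σ, hA hσ, subset_rfl, σ, subset_rfl, hL.1 σ (hA hσ), hσ⟩

theorem extOp_eq_closedStar (hL : IsComplex L) : ExtOp L = closedStar L := by
  funext K
  ext σ
  constructor
  · rintro ⟨hσ, τ, ⟨hτ, hτK⟩, hστ⟩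
    refine ⟨hσ, τ, hτ, hστ, ?_⟩
    by_contra! hnone
    exact hτK ⟨hτ, fun ρ hρτ hρ => ⟨hL.2 τ hτ ρ hρτ hρ, hnone ρ hρτ hρ⟩⟩
  · rintro ⟨hσ, τ, hτ, hστ, ρ, hρτ, hρ, hρK⟩
    exact ⟨hσ, τ, ⟨hτ, fun hτK => (hτK.2 ρ hρτ hρ).2 hρK⟩, hστ⟩

theorem intOp_iterate_subset {H : Set (Finset α)} (hH : H ⊆ L) (j : ℕ) :
    (IntOp L)^[j] H ⊆ L := by
  cases j with
  | zero => exact hH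
  | succ j => rw [Function.iterate_succ_apply']; exact fun _ h => h.1

variable [DecidableEq α]

theorem meeting_subset (A : Set (Finset α)) : meeting L A ⊆ L := fun _ h => h.1

theorem meeting_mono : Monotone (meeting L) := by
  rintro A B hAB σ ⟨hσ, τ, hτ, hστ⟩
  exact ⟨hσ, τ, hAB hτ, hστ⟩

theorem subset_meeting (hL : IsComplex L) {A : Set (Finset α)} (hA : A ⊆ L) :
    A ⊆ meeting L A :=
  fun σ hσ => ⟨hA hσ, σ, hσ, by simpa using hL.1 σ (hA hσ)⟩

theorem gam_intOp (hL : IsComplex L) (H : Set (Finset α)) :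
    gam L (IntOp L H) = meeting L (gam L H) := by
  ext σ
  constructor
  · rintro ⟨hσ, hσH⟩
    refine ⟨hσ, ?_⟩
    by_contra! hdisj
    refine hσH ⟨hσ, fun ρ hρσ hρ => ⟨hL.2 σ hσ ρ hρσ hρ, ?_⟩⟩
    rintro ⟨-, τ, hτ, hρτ⟩
    obtain ⟨v, hv⟩ := hρ
    simpa [hdisj τ hτ] using Finset.mem_inter.2 ⟨hρσ hv, hρτ hv⟩
  · rintro ⟨hσ, τ, hτ, hστ⟩
    refine ⟨hσ, fun ⟨_, hσH⟩ => ?_⟩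
    have hρ := hσH (σ ∩ τ) Finset.inter_subset_left hστ
    exact hρ.2 ⟨hρ.1, τ, hτ, Finset.inter_subset_right⟩

theorem gam_intOp_iterate (hL : IsComplex L) (H : Set (Finset α)) (j : ℕ) :
    gam L ((IntOp L)^[j] H) = (meeting L)^[j] (gam L H) := by
  induction j with
  | zero => rfl
  | succ n ih => rw [Function.iterate_succ_apply', Function.iterate_succ_apply', ← ih, gam_intOp hL]

theorem intOp_iterate_eq_empty_iff (hL : IsComplex L) {H : Set (Finset α)} (hH : H ⊆ L)
    (j : ℕ) : (IntOp L)^[j] H = ∅ ↔ (meeting L)^[j] (gam L H) = L := by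
  rw [← gam_intOp_iterate hL, gam, sdiff_eq_left, disjoint_comm,
    disjoint_of_subset_iff_left_eq_empty (intOp_iterate_subset hH j)]

theorem closedStar_meeting_subset (hL : IsComplex L) (A : Set (Finset α)) :
    closedStar L (meeting L A) ⊆ meeting L (meeting L A) := by
  rintro σ ⟨hσ, τ, hτ, hστ, ρ, hρτ, -, -, μ, hμ, hρμ⟩
  refine ⟨hσ, τ, ⟨hτ, μ, hμ, hρμ.mono (Finset.inter_subset_inter hρτ subset_rfl)⟩, ?_⟩
  simpa [Finset.inter_eq_left.2 hστ] using hL.1 σ hσ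

/-- A shared vertex `v` of `σ` and `τ` is a face of `σ` lying in the closed star, as `{v} ⊆ τ`. -/
theorem meeting_closedStar_subset (hL : IsComplex L) (A : Set (Finset α)) :
    meeting L (closedStar L A) ⊆ closedStar L (closedStar L A) := by
  rintro σ ⟨hσ, τ, ⟨hτ, τ', hτ', hττ', ρ, hρτ', hρ, hρA⟩, v, hv⟩
  rw [Finset.mem_inter] at hv
  have hvτ : {v} ⊆ τ := Finset.singleton_subset_iff.2 hv.2
  refine ⟨hσ, σ, hσ, subset_rfl, {v}, Finset.singleton_subset_iff.2 hv.1,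
    Finset.singleton_nonempty v, ?_⟩
  exact ⟨hL.2 τ hτ {v} hvτ (Finset.singleton_nonempty v), τ', hτ', hvτ.trans hττ', ρ, hρτ',
    hρ, hρA⟩

end Operators

theorem int_ext_vanishing_times_general (L : Set (Finset V)) (hL : IsComplex L)
    (H : Set (Finset V)) (hH : H ⊆ L)
    (r t : ℕ)
    (hr : (ExtOp L)^[r] (gam L H) = L ∧ ∀ j < r, (ExtOp L)^[j] (gam L H) ≠ L)
    (ht : (IntOp L)^[t] H = ∅ ∧ ∀ j < t, (IntOp L)^[j] H ≠ ∅) :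
    t = r - 1 ∨ t = r ∨ t = r + 1 := by
  have hK : gam L H ⊆ L := sdiff_subset
  rw [extOp_eq_closedStar hL] at hr
  have hint : ∀ j, (meeting L)^[j + 1] (gam L H) ⊆ L := fun j => by
    rw [Function.iterate_succ_apply']; exact meeting_subset _
  have hext : ∀ j, (closedStar L)^[j + 1] (gam L H) ⊆ L := fun j => by
    rw [Function.iterate_succ_apply']; exact closedStar_subset _
  have htr : t ≤ r + 1 := by
    by_contra! h
    refine ht.2 (r + 1) h ((intOp_iterate_eq_empty_iff hL hH _).2 ((hint r).antisymm ?_))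
    have := iterate_le_iterate_succ closedStar_mono (closedStar_meeting_subset hL)
      (subset_meeting hL hK) r
    rwa [hr.1] at this
  have hrt : r ≤ t + 1 := by
    by_contra! h
    refine hr.2 (t + 1) h ((hext t).antisymm ?_)
    have := iterate_le_iterate_succ meeting_mono (meeting_closedStar_subset hL)
      (subset_closedStar hL hK) t
    rwa [(intOp_iterate_eq_empty_iff hL hH t).1 ht.1] at this
  omega

theorem int_ext_vanishing_times (L : Set (Finset V)) (hfin : L.Finite) (hL : IsComplex L)
    (hconn : IsConn L) (H : Set (Finset V)) (hH : H ⊆ L)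
    (hne : H ≠ L) (hne' : gam L H ≠ ∅)
    (r t : ℕ)
    (hr : (ExtOp L)^[r] (gam L H) = L ∧ ∀ j < r, (ExtOp L)^[j] (gam L H) ≠ L)
    (ht : (IntOp L)^[t] H = ∅ ∧ ∀ j < t, (IntOp L)^[j] H ≠ ∅) :
    t = r - 1 ∨ t = r ∨ t = r + 1 :=
  int_ext_vanishing_times_general L hL H hH r t hr ht
end
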